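/- The generating function S(t,z) = Σ_{n ≥ 1} S_n(t) z^n of the descent polynomials of separable permutations satisfies the cubic functional equation S = z + (1+t) z S + t z S^2 + t S^3, as an identity of formal power series in z over ℚ[t]. -/

import Mathlib

open Polynomial Finset

/-- Values of a permutation of `Fin n` as a function `ℕ → ℕ` (0-indexed). -/
def permVal {n : ℕ} (π : Equiv.Perm (Fin n)) (i : ℕ) : ℕ :=
  if h : i < n then (π ⟨i, h⟩ : ℕ) else 0

/-- Number of descents of a permutation. -/
def desNum {n : ℕ} (π : Equiv.Perm (Fin n)) : ℕ :=
  ((Finset.range (n - 1)).filter (fun i => permVal π (i + 1) < permVal π i)).card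

/-- `π` contains the pattern given by the word `σ`. -/
def ContainsPat {n k : ℕ} (π : Equiv.Perm (Fin n)) (σ : Fin k → ℕ) : Prop :=
  ∃ f : Fin k → Fin n, (∀ i j : Fin k, i < j → f i < f j) ∧
    ∀ i j : Fin k, σ i < σ j ↔ π (f i) < π (f j)

/-- A separable permutation avoids both 2413 and 3142. -/
def SepPerm {n : ℕ} (π : Equiv.Perm (Fin n)) : Prop :=
  ¬ ContainsPat π ![2, 4, 1, 3] ∧ ¬ ContainsPat π ![3, 1, 4, 2]

open scoped Classical in
/-- Descent polynomial of separable permutations. -/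
noncomputable def sepPoly (n : ℕ) : Polynomial ℤ :=
  ∑ π ∈ Finset.univ.filter (fun π : Equiv.Perm (Fin n) => SepPerm π), X ^ desNum π


/-- The generating function `S(t,z) = ∑_{n ≥ 1} S_n(t) zⁿ` as a formal power series in `z`
over `ℚ[t]`. -/
noncomputable def sepSeries : PowerSeries (Polynomial ℚ) :=
  PowerSeries.mk fun n => if n = 0 then 0 else (sepPoly n).map (Int.castRingHom ℚ)

/-!
A separable permutation of length at least two is a direct sum `α ⊕ β` or a skew sum `α ⊖ β`,
and never both: delete its maximum, split what is left by induction, and put the maximum back;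
if it lands inside the first block, then either it creates a `2413` (resp. `3142`) or the
permutation splits at the maximum instead. Cutting off the shortest possible first block makes
the decomposition unique, with `α` sum- (resp. skew-) indecomposable, and
`des (α ⊕ β) = des α + des β`, `des (α ⊖ β) = des α + des β + 1`. For the generating functions
`U`, `V` of the sum- and skew-indecomposable separable permutations this gives
`S + z = U + V`, `V = z + U S` and `U = z + t V S`; eliminating `U` and `V` leaves the cubic.
-/

open Equiv

section PermVal

variable {n : ℕ}

lemma permVal_of_lt (π : Perm (Fin n)) {i : ℕ} (hi : i < n) : permVal π i = π ⟨i, hi⟩ :=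
  dif_pos hi

lemma permVal_of_le (π : Perm (Fin n)) {i : ℕ} (hi : n ≤ i) : permVal π i = 0 :=
  dif_neg (by omega)

lemma permVal_lt (π : Perm (Fin n)) {i : ℕ} (hi : i < n) : permVal π i < n := by
  rw [permVal_of_lt π hi]
  exact Fin.is_lt _

lemma permVal_injOn (π : Perm (Fin n)) : Set.InjOn (permVal π) (Set.Iio n) := by
  intro i hi j hj h
  rw [permVal_of_lt π hi, permVal_of_lt π hj] at h
  exact congrArg Fin.val (π.injective (Fin.ext h))

lemma permVal_inj (π : Perm (Fin n)) {i j : ℕ} (hi : i < n) (hj : j < n) :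
    permVal π i = permVal π j ↔ i = j :=
  ⟨fun h => permVal_injOn π hi hj h, fun h => h ▸ rfl⟩

lemma exists_permVal_eq (π : Perm (Fin n)) {v : ℕ} (hv : v < n) :
    ∃ i < n, permVal π i = v :=
  ⟨π.symm ⟨v, hv⟩, Fin.is_lt _, by simp [permVal_of_lt]⟩

lemma permVal_injective : Function.Injective (permVal : Perm (Fin n) → ℕ → ℕ) := by
  intro π σ h
  ext i
  simpa [permVal_of_lt _ i.2] using congrFun h i

lemma card_le_of_mapsTo_permVal (π : Perm (Fin n)) {lo hi lo' hi' : ℕ} (hn : hi ≤ n)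
    (h : Set.MapsTo (permVal π) (Set.Ico lo hi) (Set.Ico lo' hi')) : hi - lo ≤ hi' - lo' := by
  have := Finset.card_le_card_of_injOn (s := Finset.Ico lo hi) (t := Finset.Ico lo' hi')
    (permVal π) (by simpa using h) ((permVal_injOn π).mono fun i hi => by simp at hi; simp; omega)
  simpa using this

noncomputable def permOfFun (n : ℕ) (f : ℕ → ℕ) (hf : ∀ i < n, f i < n)
    (hinj : ∀ i < n, ∀ j < n, f i = f j → i = j) : Perm (Fin n) :=
  Equiv.ofBijective (fun i => ⟨f i, hf i i.2⟩) <| Finite.injective_iff_bijective.mp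
    fun i j h => Fin.ext (hinj i i.2 j j.2 (congrArg Fin.val h))

lemma permVal_permOfFun {f : ℕ → ℕ} {hf : ∀ i < n, f i < n}
    {hinj : ∀ i < n, ∀ j < n, f i = f j → i = j}
    {i : ℕ} (hi : i < n) : permVal (permOfFun n f hf hinj) i = f i := by
  simp [permVal_of_lt _ hi, permOfFun]

end PermVal

section Patterns

variable {n m k : ℕ}

def IsOccurrence (π : Perm (Fin n)) (σ : Fin k → ℕ) (f : Fin k → ℕ) : Prop :=
  StrictMono f ∧ (∀ t, f t < n) ∧ ∀ s t, σ s < σ t ↔ permVal π (f s) < permVal π (f t)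

lemma containsPat_iff_exists_isOccurrence {π : Perm (Fin n)} {σ : Fin k → ℕ} :
    ContainsPat π σ ↔ ∃ f, IsOccurrence π σ f := by
  constructor
  · rintro ⟨f, hmono, hord⟩
    refine ⟨fun t => f t, fun s t hst => hmono s t hst, fun t => (f t).2, fun s t => ?_⟩
    rw [hord, permVal_of_lt π (f s).2, permVal_of_lt π (f t).2]
    rfl
  · rintro ⟨f, hmono, hlt, hord⟩
    refine ⟨fun t => ⟨f t, hlt t⟩, fun s t hst => hmono hst, fun s t => ?_⟩
    rw [hord, permVal_of_lt π (hlt s), permVal_of_lt π (hlt t)]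
    rfl

lemma ContainsPat.of_embedding {π : Perm (Fin n)} {τ : Perm (Fin m)} {σ : Fin k → ℕ}
    (g : ℕ → ℕ) (hg : StrictMonoOn g (Set.Iio m)) (hgn : ∀ i < m, g i < n)
    (hord : ∀ i < m, ∀ j < m,
      permVal τ i < permVal τ j ↔ permVal π (g i) < permVal π (g j))
    (h : ContainsPat τ σ) : ContainsPat π σ := by
  obtain ⟨f, hmono, hlt, hf⟩ := containsPat_iff_exists_isOccurrence.mp h
  refine containsPat_iff_exists_isOccurrence.mpr
    ⟨g ∘ f, fun s t hst => hg (hlt s) (hlt t) (hmono hst), fun t => hgn _ (hlt t),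
      fun s t => ?_⟩
  rw [hf, hord _ (hlt s) _ (hlt t)]
  rfl

lemma ContainsPat.of_shift {π : Perm (Fin n)} {τ : Perm (Fin m)} {σ : Fin k → ℕ} {s c : ℕ}
    (hs : s + m ≤ n) (hτ : ∀ i < m, permVal π (s + i) = c + permVal τ i)
    (h : ContainsPat τ σ) : ContainsPat π σ :=
  h.of_embedding (s + ·) (fun _ _ _ _ h => by simpa using h) (fun i hi => by omega)
    fun i hi j hj => by rw [hτ i hi, hτ j hj]; omega

lemma IsOccurrence.containsPat_of_shift {π : Perm (Fin n)} {τ : Perm (Fin m)} {σ : Fin k → ℕ}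
    {s c : ℕ} {f : Fin k → ℕ} (hf : IsOccurrence π σ f)
    (hτ : ∀ i < m, permVal π (s + i) = c + permVal τ i)
    (hfs : ∀ t, s ≤ f t ∧ f t < s + m) :
    ContainsPat τ σ := by
  obtain ⟨hmono, -, hord⟩ := hf
  have hval : ∀ t, permVal π (f t) = c + permVal τ (f t - s) := fun t => by
    rw [← hτ _ (by have := hfs t; omega), Nat.add_sub_cancel' (hfs t).1]
  refine containsPat_iff_exists_isOccurrence.mpr ⟨fun t => f t - s, fun a b hab => ?_,
    fun t => ?_, fun a b => ?_⟩ <;> dsimp only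
  · have := hmono hab
    have := hfs a
    have := hfs b
    omega
  · have := hfs t
    omega
  · rw [hord, hval, hval]
    omega

lemma ContainsPat.card_le {π : Perm (Fin n)} {σ : Fin k → ℕ} (h : ContainsPat π σ) :
    k ≤ n := by
  obtain ⟨f, hmono, -⟩ := h
  simpa using Fintype.card_le_of_injective f (StrictMono.injective fun s t => hmono s t)

lemma sepPerm_of_lt (π : Perm (Fin n)) (hn : n < 4) : SepPerm π :=
  ⟨fun h => by have := h.card_le; omega, fun h => by have := h.card_le; omega⟩

lemma containsPat_of_permVal {π : Perm (Fin n)} (σ : Fin 4 → ℕ) {i₁ i₂ i₃ i₄ : ℕ}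
    (h₁₂ : i₁ < i₂) (h₂₃ : i₂ < i₃) (h₃₄ : i₃ < i₄) (h₄ : i₄ < n)
    (hord : ∀ s t, σ s < σ t ↔
      permVal π (![i₁, i₂, i₃, i₄] s) < permVal π (![i₁, i₂, i₃, i₄] t)) :
    ContainsPat π σ := by
  refine containsPat_iff_exists_isOccurrence.mpr ⟨_, ?_, fun t => ?_, hord⟩
  · refine Fin.strictMono_iff_lt_succ.mpr fun t => ?_
    fin_cases t <;> simpa
  · fin_cases t <;> simp <;> omega

lemma containsPat_2413 {π : Perm (Fin n)} {i₁ i₂ i₃ i₄ : ℕ}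
    (h₁₂ : i₁ < i₂) (h₂₃ : i₂ < i₃) (h₃₄ : i₃ < i₄) (h₄ : i₄ < n)
    (h₃₁ : permVal π i₃ < permVal π i₁) (h₁₄ : permVal π i₁ < permVal π i₄)
    (h₄₂ : permVal π i₄ < permVal π i₂) : ContainsPat π ![2, 4, 1, 3] :=
  containsPat_of_permVal _ h₁₂ h₂₃ h₃₄ h₄ fun s t => by
    fin_cases s <;> fin_cases t <;> simp <;> omega

lemma containsPat_3142 {π : Perm (Fin n)} {i₁ i₂ i₃ i₄ : ℕ}
    (h₁₂ : i₁ < i₂) (h₂₃ : i₂ < i₃) (h₃₄ : i₃ < i₄) (h₄ : i₄ < n)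
    (h₂₄ : permVal π i₂ < permVal π i₄) (h₄₁ : permVal π i₄ < permVal π i₁)
    (h₁₃ : permVal π i₁ < permVal π i₃) : ContainsPat π ![3, 1, 4, 2] :=
  containsPat_of_permVal _ h₁₂ h₂₃ h₃₄ h₄ fun s t => by
    fin_cases s <;> fin_cases t <;> simp <;> omega

end Patterns

section Cuts

variable {n a c : ℕ}

lemma card_filter_permVal (π : Perm (Fin n)) (P : ℕ → Prop) [DecidablePred P] :
    #{i ∈ range n | P (permVal π i)} = #{v ∈ range n | P v} := by
  refine card_nbij (permVal π) (fun i hi => ?_) ((permVal_injOn π).mono fun i hi => ?_)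
    fun v hv => ?_
  · simp only [coe_filter, mem_range, Set.mem_ofPred_eq] at hi ⊢
    exact ⟨permVal_lt π hi.1, hi.2⟩
  · simp only [coe_filter, mem_range, Set.mem_ofPred_eq] at hi
    exact hi.1
  · simp only [coe_filter, mem_range, Set.mem_ofPred_eq] at hv
    obtain ⟨i, hi, rfl⟩ := exists_permVal_eq π hv.1
    exact ⟨i, by simp [hi, hv.2], rfl⟩

/-- As `permVal π` is a bijection of `[0, n)`, an inclusion between equinumerous sets of
positions is an equality. -/
lemma permVal_of_card_eq (π : Perm (Fin n)) {P Q : ℕ → Prop} [DecidablePred P]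
    [DecidablePred Q] (hcard : #{v ∈ range n | P v} = #{i ∈ range n | Q i})
    (h : ∀ i < n, P (permVal π i) → Q i) {i : ℕ} (hi : i < n) (hQ : Q i) :
    P (permVal π i) := by
  have hsub : {i ∈ range n | P (permVal π i)} ⊆ {i ∈ range n | Q i} := fun j hj => by
    simp only [mem_filter, mem_range] at hj ⊢
    exact ⟨hj.1, h j hj.1 hj.2⟩
  have heq := eq_of_subset_of_card_le hsub (by rw [card_filter_permVal, hcard])
  have : i ∈ {i ∈ range n | Q i} := by simp [hi, hQ]
  rw [← heq] at this
  exact (mem_filter.mp this).2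

/-- `π` is a direct sum `α ⊕ β` with `α` of length `a`. -/
def IsSumCut (π : Perm (Fin n)) (a : ℕ) : Prop :=
  ∀ i < n, (i < a ↔ permVal π i < a)

/-- `π` is a skew sum `α ⊖ β` with `α` of length `a`. -/
def IsSkewCut (π : Perm (Fin n)) (a : ℕ) : Prop :=
  ∀ i < n, (i < a ↔ n - a ≤ permVal π i)

lemma isSumCut_of_forall {π : Perm (Fin n)} (h : ∀ i < n, permVal π i < a → i < a) :
    IsSumCut π a := by
  classical
  exact fun i hi =>
    ⟨fun hia => permVal_of_card_eq π (P := (· < a)) (Q := (· < a)) rfl h hi hia, h i hi⟩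

lemma isSkewCut_of_forall {π : Perm (Fin n)} (ha : a ≤ n)
    (h : ∀ i < n, n - a ≤ permVal π i → i < a) : IsSkewCut π a := by
  classical
  refine fun i hi =>
    ⟨fun hia => permVal_of_card_eq π (P := (n - a ≤ ·)) (Q := (· < a)) ?_ h hi hia, h i hi⟩
  rw [show {v ∈ range n | n - a ≤ v} = Ico (n - a) n by ext; simp; omega,
    show {i ∈ range n | i < a} = range a by ext; simp; omega, Nat.card_Ico, card_range]
  omega

lemma IsSumCut.not_isSkewCut {π : Perm (Fin n)} (h : IsSumCut π a) (ha : 0 < a) (han : a < n)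
    (hc : 0 < c) (hcn : c < n) : ¬ IsSkewCut π c := by
  intro h'
  obtain ⟨i, hi, hi0⟩ := exists_permVal_eq π (v := 0) (by omega)
  obtain ⟨j, hj, hjn⟩ := exists_permVal_eq π (v := n - 1) (by omega)
  have := h i hi
  have := h j hj
  have := h' i hi
  have := h' j hj
  omega

def SumDecomposable (π : Perm (Fin n)) : Prop :=
  ∃ a, 0 < a ∧ a < n ∧ IsSumCut π a

def SkewDecomposable (π : Perm (Fin n)) : Prop :=
  ∃ a, 0 < a ∧ a < n ∧ IsSkewCut π a

lemma SumDecomposable.not_skewDecomposable {π : Perm (Fin n)} (h : SumDecomposable π) :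
    ¬ SkewDecomposable π := by
  obtain ⟨a, ha, han, hcut⟩ := h
  rintro ⟨c, hc, hcn, hcut'⟩
  exact hcut.not_isSkewCut ha han hc hcn hcut'

noncomputable def minSumCut (π : Perm (Fin n)) : ℕ :=
  sInf {a | 0 < a ∧ IsSumCut π a}

noncomputable def minSkewCut (π : Perm (Fin n)) : ℕ :=
  sInf {a | 0 < a ∧ IsSkewCut π a}

lemma minSumCut_spec (π : Perm (Fin n)) : 0 < minSumCut π ∧ IsSumCut π (minSumCut π) :=
  Nat.sInf_mem (s := {a | 0 < a ∧ IsSumCut π a}) ⟨n + 1, by omega, fun i hi =>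
    iff_of_true (by omega)
    (by have := permVal_lt π hi; omega)⟩

lemma minSkewCut_spec (π : Perm (Fin n)) : 0 < minSkewCut π ∧ IsSkewCut π (minSkewCut π) :=
  Nat.sInf_mem (s := {a | 0 < a ∧ IsSkewCut π a})
    ⟨n + 1, by omega, fun i hi => iff_of_true (by omega) (by omega)⟩

lemma minSumCut_le {π : Perm (Fin n)} (hc : 0 < c) (h : IsSumCut π c) : minSumCut π ≤ c :=
  Nat.sInf_le ⟨hc, h⟩

lemma minSkewCut_le {π : Perm (Fin n)} (hc : 0 < c) (h : IsSkewCut π c) : minSkewCut π ≤ c :=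
  Nat.sInf_le ⟨hc, h⟩

lemma sumDecomposable_iff_minSumCut_lt {π : Perm (Fin n)} :
    SumDecomposable π ↔ minSumCut π < n :=
  ⟨fun ⟨_, ha, han, h⟩ => (minSumCut_le ha h).trans_lt han,
    fun h => ⟨_, (minSumCut_spec π).1, h, (minSumCut_spec π).2⟩⟩

lemma skewDecomposable_iff_minSkewCut_lt {π : Perm (Fin n)} :
    SkewDecomposable π ↔ minSkewCut π < n :=
  ⟨fun ⟨_, ha, han, h⟩ => (minSkewCut_le ha h).trans_lt han,
    fun h => ⟨_, (minSkewCut_spec π).1, h, (minSkewCut_spec π).2⟩⟩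

end Cuts

/-- Neither `2413` nor `3142` is a direct or a skew sum, so no occurrence straddles a cut. -/
lemma IsOccurrence.lt_or_le_of_cut {n a : ℕ} {π : Perm (Fin n)} {σ f : Fin 4 → ℕ}
    (hf : IsOccurrence π σ f) (hσ : σ = ![2, 4, 1, 3] ∨ σ = ![3, 1, 4, 2])
    (hcut : IsSumCut π a ∨ IsSkewCut π a) : f 3 < a ∨ a ≤ f 0 := by
  obtain ⟨hmono, hlt, hord⟩ := hf
  have := hmono (show (0 : Fin 4) < 1 by decide)
  have := hmono (show (1 : Fin 4) < 2 by decide)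
  have := hmono (show (2 : Fin 4) < 3 by decide)
  have hv := fun s t (h : σ s < σ t) => (hord s t).mp h
  by_contra!
  rcases hσ with rfl | rfl
  · have := hv 2 0 (by decide)
    have := hv 0 3 (by decide)
    have := hv 3 1 (by decide)
    rcases hcut with hc | hc <;>
    · have := hc _ (hlt 0); have := hc _ (hlt 1); have := hc _ (hlt 2); have := hc _ (hlt 3)
      omega
  · have := hv 1 3 (by decide)
    have := hv 3 0 (by decide)
    have := hv 0 2 (by decide)
    rcases hcut with hc | hc <;>
    · have := hc _ (hlt 0); have := hc _ (hlt 1); have := hc _ (hlt 2); have := hc _ (hlt 3)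
      omega

section Blocks

variable {a b c d : ℕ} {π : Perm (Fin (a + b))} {α : Perm (Fin a)} {β : Perm (Fin b)}

lemma containsPat_iff_of_blocks {σ : Fin 4 → ℕ} (hcut : IsSumCut π a ∨ IsSkewCut π a)
    (hα : ∀ i < a, permVal π i = c + permVal α i)
    (hβ : ∀ i < b, permVal π (a + i) = d + permVal β i)
    (hσ : σ = ![2, 4, 1, 3] ∨ σ = ![3, 1, 4, 2]) :
    ContainsPat π σ ↔ ContainsPat α σ ∨ ContainsPat β σ := by
  have hα' : ∀ i < a, permVal π (0 + i) = c + permVal α i := by simpa using hα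
  constructor
  · intro h
    obtain ⟨f, hf⟩ := containsPat_iff_exists_isOccurrence.mp h
    rcases hf.lt_or_le_of_cut hσ hcut with h3 | h0
    · exact .inl <| hf.containsPat_of_shift hα' fun t =>
        ⟨Nat.zero_le _,
          by simpa using (hf.1.monotone (show t ≤ 3 from Fin.le_last t)).trans_lt h3⟩
    · exact .inr <| hf.containsPat_of_shift hβ fun t =>
        ⟨h0.trans (hf.1.monotone (Fin.zero_le t)), hf.2.1 t⟩
  · rintro (h | h)
    · exact h.of_shift (by omega) hα'
    · exact h.of_shift le_rfl hβ

lemma sepPerm_iff_of_blocks (hcut : IsSumCut π a ∨ IsSkewCut π a)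
    (hα : ∀ i < a, permVal π i = c + permVal α i)
    (hβ : ∀ i < b, permVal π (a + i) = d + permVal β i) :
    SepPerm π ↔ SepPerm α ∧ SepPerm β := by
  simp only [SepPerm, containsPat_iff_of_blocks hcut hα hβ (.inl rfl),
    containsPat_iff_of_blocks hcut hα hβ (.inr rfl)]
  tauto

lemma desNum_of_blocks (ha : 0 < a) (hb : 0 < b)
    (hα : ∀ i < a, permVal π i = c + permVal α i)
    (hβ : ∀ i < b, permVal π (a + i) = d + permVal β i) :
    desNum π = desNum α + desNum β + if permVal π a < permVal π (a - 1) then 1 else 0 := by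
  classical
  simp only [desNum, card_filter]
  rw [show a + b - 1 = (a - 1) + (1 + (b - 1)) by omega, sum_range_add, sum_range_add,
    sum_range_one, add_zero, Nat.sub_add_cancel ha]
  have hleft : ∀ i ∈ range (a - 1), (if permVal π (i + 1) < permVal π i then 1 else 0) =
      if permVal α (i + 1) < permVal α i then 1 else 0 := fun i hi => by
    rw [mem_range] at hi
    simp only [hα i (by omega), hα (i + 1) (by omega), Nat.add_lt_add_iff_left]
  have hright : ∀ i ∈ range (b - 1),
      (if permVal π (a - 1 + (1 + i) + 1) < permVal π (a - 1 + (1 + i)) then 1 else 0) =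
      if permVal β (i + 1) < permVal β i then 1 else 0 := fun i hi => by
    rw [mem_range] at hi
    rw [show a - 1 + (1 + i) = a + i by omega]
    simp only [hβ i (by omega), add_assoc, hβ (i + 1) (by omega), Nat.add_lt_add_iff_left]
  rw [sum_congr rfl hleft, sum_congr rfl hright]
  ring

end Blocks

section Sums

variable {a b : ℕ}

noncomputable def directSum (α : Perm (Fin a)) (β : Perm (Fin b)) : Perm (Fin (a + b)) :=
  permOfFun (a + b) (fun i => if i < a then permVal α i else a + permVal β (i - a))
    (fun i hi => by
      split_ifs with h
      · have := permVal_lt α h; omega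
      · have := permVal_lt β (show i - a < b by omega); omega)
    (fun i hi j hj hij => by
      split_ifs at hij with h₁ h₂ h₂
      · exact (permVal_inj α h₁ h₂).mp hij
      · have := permVal_lt α h₁; omega
      · have := permVal_lt α h₂; omega
      · have := (permVal_inj β (show i - a < b by omega) (show j - a < b by omega)).mp (by omega)
        omega)

noncomputable def skewSum (α : Perm (Fin a)) (β : Perm (Fin b)) : Perm (Fin (a + b)) :=
  permOfFun (a + b) (fun i => if i < a then b + permVal α i else permVal β (i - a))
    (fun i hi => by
      split_ifs with h
      · have := permVal_lt α h; omega
      · have := permVal_lt β (show i - a < b by omega); omega)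
    (fun i hi j hj hij => by
      split_ifs at hij with h₁ h₂ h₂
      · exact (permVal_inj α h₁ h₂).mp (by omega)
      · have := permVal_lt β (show j - a < b by omega); omega
      · have := permVal_lt β (show i - a < b by omega); omega
      · have := (permVal_inj β (show i - a < b by omega) (show j - a < b by omega)).mp hij
        omega)

variable (α : Perm (Fin a)) (β : Perm (Fin b))

lemma permVal_directSum {i : ℕ} (hi : i < a + b) :
    permVal (directSum α β) i = if i < a then permVal α i else a + permVal β (i - a) :=
  permVal_permOfFun hi

lemma permVal_skewSum {i : ℕ} (hi : i < a + b) :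
    permVal (skewSum α β) i = if i < a then b + permVal α i else permVal β (i - a) :=
  permVal_permOfFun hi

lemma permVal_directSum_left (i : ℕ) (hi : i < a) :
    permVal (directSum α β) i = permVal α i := by
  rw [permVal_directSum α β (by omega), if_pos hi]

lemma permVal_directSum_right (i : ℕ) (hi : i < b) :
    permVal (directSum α β) (a + i) = a + permVal β i := by
  rw [permVal_directSum α β (by omega), if_neg (by omega), Nat.add_sub_cancel_left]

lemma permVal_skewSum_left (i : ℕ) (hi : i < a) :
    permVal (skewSum α β) i = b + permVal α i := by
  rw [permVal_skewSum α β (by omega), if_pos hi]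

lemma permVal_skewSum_right (i : ℕ) (hi : i < b) :
    permVal (skewSum α β) (a + i) = permVal β i := by
  rw [permVal_skewSum α β (by omega), if_neg (by omega), Nat.add_sub_cancel_left]

lemma isSumCut_directSum : IsSumCut (directSum α β) a := fun i hi => by
  rw [permVal_directSum α β hi]
  split_ifs with h
  · simp [h, permVal_lt α h]
  · simp [h]

lemma isSkewCut_skewSum : IsSkewCut (skewSum α β) a := fun i hi => by
  rw [permVal_skewSum α β hi]
  split_ifs with h
  · simp only [h, true_iff]; omega
  · have := permVal_lt β (show i - a < b by omega); omega

lemma sepPerm_directSum_iff : SepPerm (directSum α β) ↔ SepPerm α ∧ SepPerm β :=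
  sepPerm_iff_of_blocks (c := 0) (.inl (isSumCut_directSum α β))
    (fun i hi => by rw [zero_add, permVal_directSum_left α β i hi])
    (permVal_directSum_right α β)

lemma sepPerm_skewSum_iff : SepPerm (skewSum α β) ↔ SepPerm α ∧ SepPerm β :=
  sepPerm_iff_of_blocks (d := 0) (.inr (isSkewCut_skewSum α β)) (permVal_skewSum_left α β)
    (fun i hi => by rw [zero_add, permVal_skewSum_right α β i hi])

lemma desNum_directSum (ha : 0 < a) (hb : 0 < b) :
    desNum (directSum α β) = desNum α + desNum β := by
  have h₀ : permVal (directSum α β) a = a + permVal β 0 := by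
    simpa using permVal_directSum_right α β 0 hb
  rw [desNum_of_blocks (c := 0) ha hb
    (fun i hi => by rw [zero_add, permVal_directSum_left α β i hi])
    (permVal_directSum_right α β), permVal_directSum_left α β (a - 1) (by omega), h₀,
    if_neg (by have := permVal_lt α (show a - 1 < a by omega); omega), add_zero]

lemma desNum_skewSum (ha : 0 < a) (hb : 0 < b) :
    desNum (skewSum α β) = desNum α + desNum β + 1 := by
  have h₀ : permVal (skewSum α β) a = permVal β 0 := by
    simpa using permVal_skewSum_right α β 0 hb
  rw [desNum_of_blocks (d := 0) ha hb (permVal_skewSum_left α β)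
    (fun i hi => by rw [zero_add, permVal_skewSum_right α β i hi]),
    permVal_skewSum_left α β (a - 1) (by omega), h₀,
    if_pos (by have := permVal_lt β hb; omega)]

end Sums

section Decompose

variable {a b c : ℕ}

lemma directSum_injective2 :
    Function.Injective2 (directSum : Perm (Fin a) → Perm (Fin b) → Perm (Fin (a + b))) := by
  intro α α' β β' h
  have h' := congrFun (congrArg permVal h)
  refine ⟨permVal_injective (funext fun i => ?_), permVal_injective (funext fun i => ?_)⟩
  · by_cases hi : i < a
    · simpa [permVal_directSum_left _ _ i hi] using h' i
    · rw [permVal_of_le _ (not_lt.mp hi), permVal_of_le _ (not_lt.mp hi)]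
  · by_cases hi : i < b
    · simpa [permVal_directSum_right _ _ i hi] using h' (a + i)
    · rw [permVal_of_le _ (not_lt.mp hi), permVal_of_le _ (not_lt.mp hi)]

lemma skewSum_injective2 :
    Function.Injective2 (skewSum : Perm (Fin a) → Perm (Fin b) → Perm (Fin (a + b))) := by
  intro α α' β β' h
  have h' := congrFun (congrArg permVal h)
  refine ⟨permVal_injective (funext fun i => ?_), permVal_injective (funext fun i => ?_)⟩
  · by_cases hi : i < a
    · simpa [permVal_skewSum_left _ _ i hi] using h' i
    · rw [permVal_of_le _ (not_lt.mp hi), permVal_of_le _ (not_lt.mp hi)]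
  · by_cases hi : i < b
    · simpa [permVal_skewSum_right _ _ i hi] using h' (a + i)
    · rw [permVal_of_le _ (not_lt.mp hi), permVal_of_le _ (not_lt.mp hi)]

lemma IsSumCut.exists_directSum_eq {π : Perm (Fin (a + b))} (h : IsSumCut π a) :
    ∃ α β, directSum α β = π := by
  have hhi : ∀ i < b, a ≤ permVal π (a + i) ∧ permVal π (a + i) < a + b := fun i hi =>
    ⟨by have := h (a + i) (by omega); omega, permVal_lt π (by omega)⟩
  refine ⟨permOfFun a (permVal π) (fun i hi => (h i (by omega)).mp hi)
      fun i hi j hj => (permVal_inj π (by omega) (by omega)).mp,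
    permOfFun b (fun i => permVal π (a + i) - a) (fun i hi => by have := hhi i hi; omega)
      (fun i hi j hj hij => ?_), permVal_injective (funext fun i => ?_)⟩
  · have := hhi i hi
    have := hhi j hj
    have := (permVal_inj π (show a + i < a + b by omega) (show a + j < a + b by omega)).mp
      (by omega)
    omega
  · by_cases hi : i < a + b
    · rw [permVal_directSum _ _ hi]
      split_ifs with hia
      · exact permVal_permOfFun hia
      · obtain ⟨j, rfl⟩ : ∃ j, i = a + j := ⟨i - a, by omega⟩
        have := hhi j (by omega)
        rw [permVal_permOfFun (by omega), Nat.add_sub_cancel_left]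
        omega
    · rw [permVal_of_le _ (not_lt.mp hi), permVal_of_le _ (not_lt.mp hi)]

lemma IsSkewCut.exists_skewSum_eq {π : Perm (Fin (a + b))} (h : IsSkewCut π a) :
    ∃ α β, skewSum α β = π := by
  have hlo : ∀ i < a, b ≤ permVal π i ∧ permVal π i < a + b := fun i hi =>
    ⟨by have := h i (by omega); omega, permVal_lt π (by omega)⟩
  have hhi : ∀ i < b, permVal π (a + i) < b := fun i hi => by
    have := h (a + i) (by omega); omega
  refine ⟨permOfFun a (fun i => permVal π i - b) (fun i hi => by have := hlo i hi; omega)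
      (fun i hi j hj hij => ?_), permOfFun b (fun i => permVal π (a + i)) hhi
      (fun i hi j hj hij => ?_), permVal_injective (funext fun i => ?_)⟩
  · have := hlo i hi
    have := hlo j hj
    exact (permVal_inj π (show i < a + b by omega) (show j < a + b by omega)).mp
      (by omega)
  · have := (permVal_inj π (show a + i < a + b by omega) (show a + j < a + b by omega)).mp hij
    omega
  · by_cases hi : i < a + b
    · rw [permVal_skewSum _ _ hi]
      split_ifs with hia
      · have := hlo i hia
        rw [permVal_permOfFun hia]
        omega
      · obtain ⟨j, rfl⟩ : ∃ j, i = a + j := ⟨i - a, by omega⟩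
        rw [permVal_permOfFun (by omega), Nat.add_sub_cancel_left]
    · rw [permVal_of_le _ (not_lt.mp hi), permVal_of_le _ (not_lt.mp hi)]

variable {α : Perm (Fin a)} {β : Perm (Fin b)}

lemma isSumCut_directSum_iff (hc : c ≤ a) : IsSumCut (directSum α β) c ↔ IsSumCut α c := by
  refine ⟨fun h i hi => ?_, fun h i hi => ?_⟩
  · rw [← permVal_directSum_left α β i hi]
    exact h i (by omega)
  · rw [permVal_directSum α β hi]
    split_ifs with hia
    · exact h i hia
    · omega

lemma isSkewCut_skewSum_iff (hc : c ≤ a) : IsSkewCut (skewSum α β) c ↔ IsSkewCut α c := by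
  refine ⟨fun h i hi => ?_, fun h i hi => ?_⟩
  · have := h i (by omega)
    rw [permVal_skewSum_left α β i hi] at this
    omega
  · rw [permVal_skewSum α β hi]
    split_ifs with hia
    · have := h i hia
      omega
    · have := permVal_lt β (show i - a < b by omega)
      omega

lemma minSumCut_eq_iff (ha : 0 < a) {π : Perm (Fin (a + b))} :
    minSumCut π = a ↔ ∃ α β, ¬ SumDecomposable α ∧ directSum α β = π := by
  constructor
  · intro h
    obtain ⟨-, hcut⟩ := minSumCut_spec π
    rw [h] at hcut
    obtain ⟨α, β, rfl⟩ := hcut.exists_directSum_eq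
    refine ⟨α, β, fun ⟨c, hc, hca, hcut'⟩ => ?_, rfl⟩
    have := minSumCut_le hc ((isSumCut_directSum_iff (β := β) hca.le).mpr hcut')
    omega
  · rintro ⟨α, β, hα, rfl⟩
    refine le_antisymm (minSumCut_le ha (isSumCut_directSum α β)) (not_lt.mp fun hlt => hα ?_)
    obtain ⟨h0, hcut⟩ := minSumCut_spec (directSum α β)
    exact ⟨_, h0, hlt, (isSumCut_directSum_iff hlt.le).mp hcut⟩

lemma minSkewCut_eq_iff (ha : 0 < a) {π : Perm (Fin (a + b))} :
    minSkewCut π = a ↔ ∃ α β, ¬ SkewDecomposable α ∧ skewSum α β = π := by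
  constructor
  · intro h
    obtain ⟨-, hcut⟩ := minSkewCut_spec π
    rw [h] at hcut
    obtain ⟨α, β, rfl⟩ := hcut.exists_skewSum_eq
    refine ⟨α, β, fun ⟨c, hc, hca, hcut'⟩ => ?_, rfl⟩
    have := minSkewCut_le hc ((isSkewCut_skewSum_iff (β := β) hca.le).mpr hcut')
    omega
  · rintro ⟨α, β, hα, rfl⟩
    refine le_antisymm (minSkewCut_le ha (isSkewCut_skewSum α β)) (not_lt.mp fun hlt => hα ?_)
    obtain ⟨h0, hcut⟩ := minSkewCut_spec (skewSum α β)
    exact ⟨_, h0, hlt, (isSkewCut_skewSum_iff hlt.le).mp hcut⟩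

end Decompose

section EraseMax

variable {m k : ℕ} (π : Perm (Fin (m + 1)))

def maxPos : ℕ := π.symm (Fin.last m)

lemma maxPos_lt : maxPos π < m + 1 := Fin.is_lt _

lemma permVal_maxPos : permVal π (maxPos π) = m := by
  rw [permVal_of_lt π (maxPos_lt π)]
  simp [maxPos]

lemma permVal_lt_of_ne_maxPos {i : ℕ} (hi : i < m + 1) (hne : i ≠ maxPos π) :
    permVal π i < m := by
  have := permVal_lt π hi
  have := (permVal_inj π hi (maxPos_lt π)).not.mpr hne
  rw [permVal_maxPos] at this
  omega

noncomputable def eraseMax : Perm (Fin m) :=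
  permOfFun m (fun i => permVal π (if i < maxPos π then i else i + 1))
    (fun i hi => permVal_lt_of_ne_maxPos π (by split_ifs <;> omega) (by split_ifs <;> omega))
    (fun i hi j hj hij => by
      have := (permVal_inj π (by split_ifs <;> omega) (by split_ifs <;> omega)).mp hij
      split_ifs at this <;> omega)

variable {π}

lemma permVal_eraseMax_of_lt {i : ℕ} (hi : i < maxPos π) (him : i < m) :
    permVal (eraseMax π) i = permVal π i := by
  rw [eraseMax, permVal_permOfFun him, if_pos hi]

lemma permVal_eraseMax_of_le {i : ℕ} (hi : maxPos π ≤ i) (him : i < m) :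
    permVal (eraseMax π) i = permVal π (i + 1) := by
  rw [eraseMax, permVal_permOfFun him, if_neg (by omega)]

lemma SepPerm.eraseMax (h : SepPerm π) : SepPerm (_root_.eraseMax π) := by
  have hemb {σ : Fin 4 → ℕ} : ContainsPat (_root_.eraseMax π) σ → ContainsPat π σ :=
    ContainsPat.of_embedding (fun i => if i < maxPos π then i else i + 1)
      (fun i _ j _ hij => by dsimp only; split_ifs <;> omega)
      (fun i hi => by split_ifs <;> omega)
      fun i hi j hj => by
        rw [_root_.eraseMax, permVal_permOfFun hi, permVal_permOfFun hj]
  exact ⟨fun hc => h.1 (hemb hc), fun hc => h.2 (hemb hc)⟩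

lemma isSkewCut_one_of_maxPos_eq_zero (h : maxPos π = 0) : IsSkewCut π 1 :=
  isSkewCut_of_forall (by omega) fun i hi hv => by
    by_contra hne
    have := permVal_lt_of_ne_maxPos π hi (by omega)
    omega

lemma isSumCut_of_maxPos_eq (h : maxPos π = m) : IsSumCut π m :=
  isSumCut_of_forall fun i hi hv => by
    by_contra hne
    have : i = maxPos π := by omega
    rw [this, permVal_maxPos] at hv
    omega

lemma IsSumCut.of_eraseMax (hk : IsSumCut (eraseMax π) k) (hkp : k ≤ maxPos π) (hkm : k ≤ m) :
    IsSumCut π k := by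
  intro i hi
  rcases lt_trichotomy i (maxPos π) with h | rfl | h
  · rw [← permVal_eraseMax_of_lt h (by have := maxPos_lt π; omega)]
    exact hk i (by have := maxPos_lt π; omega)
  · rw [permVal_maxPos]
    omega
  · have := hk (i - 1) (by omega)
    rw [permVal_eraseMax_of_le (by omega) (by omega), Nat.sub_add_cancel (by omega)] at this
    omega

lemma IsSkewCut.succ_of_eraseMax (hk : IsSkewCut (eraseMax π) k) (hpk : maxPos π ≤ k) :
    IsSkewCut π (k + 1) := by
  intro i hi
  rcases lt_trichotomy i (maxPos π) with h | rfl | h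
  · have := hk i (by have := maxPos_lt π; omega)
    rw [permVal_eraseMax_of_lt h (by have := maxPos_lt π; omega)] at this
    omega
  · rw [permVal_maxPos]
    omega
  · have := hk (i - 1) (by omega)
    rw [permVal_eraseMax_of_le (by omega) (by omega), Nat.sub_add_cancel (by omega)] at this
    omega

/-- Here `eraseMax π = α ⊕ β` and the maximum sits strictly inside `α`: either an entry before
the maximum lies above one between the maximum and the end of `α`, giving a `2413` with the
maximum and the entry right after `α`, or `π` splits at the maximum. -/
lemma isSumCut_maxPos_of_eraseMax (h2413 : ¬ ContainsPat π ![2, 4, 1, 3])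
    (hk : IsSumCut (eraseMax π) k) (hpk : maxPos π < k) (hkm : k < m) :
    IsSumCut π (maxPos π) := by
  set p := maxPos π
  have hleft : ∀ i < p, permVal π i < k := fun i hi => by
    rw [← permVal_eraseMax_of_lt hi (by omega)]
    exact (hk i (by omega)).mp (by omega)
  have hmid : ∀ q, p < q → q ≤ k → permVal π q < k := fun q hpq hqk => by
    have := (hk (q - 1) (by omega)).mp (by omega)
    rwa [permVal_eraseMax_of_le (by omega) (by omega), Nat.sub_add_cancel (by omega)] at this
  have hright : ∀ q, k < q → q < m + 1 → k ≤ permVal π q := fun q hkq hq => by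
    have := (hk (q - 1) (by omega)).not.mp (by omega)
    rw [permVal_eraseMax_of_le (by omega) (by omega), Nat.sub_add_cancel (by omega)] at this
    omega
  have hinc : ∀ i q, i < p → p < q → q ≤ k → permVal π i < permVal π q := by
    intro i q hi hpq hqk
    by_contra! hle
    have hne := (permVal_inj π (show q < m + 1 by omega) (show i < m + 1 by omega)).not.mpr
      (by omega)
    exact h2413 <| containsPat_2413 hi hpq (show q < k + 1 by omega) (show k + 1 < m + 1 by omega)
      (by omega) ((hleft i hi).trans_le (hright _ (by omega) (by omega)))
      (by rw [permVal_maxPos]; exact permVal_lt_of_ne_maxPos π (by omega) (by omega))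
  refine isSumCut_of_forall fun q hq hqv => ?_
  by_contra! hpq
  rcases hpq.lt_or_eq with hpq | rfl
  · by_cases hqk : q ≤ k
    · have := card_le_of_mapsTo_permVal π (lo := 0) (lo' := 0) (hi' := permVal π q) (by omega)
        fun i hi => ⟨Nat.zero_le _, hinc i q hi.2 hpq hqk⟩
      omega
    · have := hright q (by omega) hq
      omega
  · rw [permVal_maxPos] at hqv
    omega

/-- Here `eraseMax π = α ⊖ β` and the maximum sits strictly inside `β`: either an entry of `β`
before the maximum lies below one after it, giving a `3142` with the first entry and the maximum,
or `π` splits right after the maximum. -/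
lemma isSkewCut_maxPos_succ_of_eraseMax (h3142 : ¬ ContainsPat π ![3, 1, 4, 2])
    (hk : IsSkewCut (eraseMax π) k) (hk0 : 0 < k) (hkp : k < maxPos π) (hpm : maxPos π < m) :
    IsSkewCut π (maxPos π + 1) := by
  set p := maxPos π
  have hleft : ∀ i < k, m - k ≤ permVal π i := fun i hi => by
    rw [← permVal_eraseMax_of_lt (by omega) (by omega)]
    exact (hk i (by omega)).mp hi
  have hmid : ∀ i, k ≤ i → i < p → permVal π i < m - k := fun i hki hip => by
    have := (hk i (by omega)).not.mp (by omega)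
    rw [permVal_eraseMax_of_lt hip (by omega)] at this
    omega
  have hright : ∀ j, p < j → j < m + 1 → permVal π j < m - k := fun j hpj hj => by
    have := (hk (j - 1) (by omega)).not.mp (by omega)
    rw [permVal_eraseMax_of_le (by omega) (by omega), Nat.sub_add_cancel (by omega)] at this
    omega
  have hdec : ∀ q j, k ≤ q → q < p → p < j → j < m + 1 →
      permVal π j < permVal π q := by
    intro q j hkq hqp hpj hj
    by_contra! hle
    have hne := (permVal_inj π (show q < m + 1 by omega) (show j < m + 1 by omega)).not.mpr
      (by omega)
    exact h3142 <| containsPat_3142 (show 0 < q by omega) hqp hpj hj (by omega)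
      ((hright j hpj hj).trans_le (hleft 0 hk0))
      (by rw [permVal_maxPos]; exact permVal_lt_of_ne_maxPos π (by omega) (by omega))
  refine isSkewCut_of_forall (by omega) fun j hj hjv => ?_
  by_contra! hpj
  have hjm := hright j (by omega) hj
  have := card_le_of_mapsTo_permVal π (lo := 0) (hi := p + 1) (lo' := permVal π j + 1)
    (hi' := m + 1) (by omega) fun i hi => by
      simp only [Set.mem_Ico] at hi ⊢
      refine ⟨?_, permVal_lt π (by omega)⟩
      rcases Nat.lt_or_ge i k with hik | hki
      · have := hleft i hik
        omega
      · rcases (Nat.lt_succ_iff.mp hi.2).lt_or_eq with hip | rfl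
        · exact hdec i j hki hip (by omega) hj
        · rw [permVal_maxPos]
          omega
  omega

theorem SepPerm.sumDecomposable_or_skewDecomposable {n : ℕ} {π : Perm (Fin n)} (hπ : SepPerm π)
    (hn : 2 ≤ n) : SumDecomposable π ∨ SkewDecomposable π := by
  induction n with
  | zero => omega
  | succ m ih =>
    rcases Nat.eq_zero_or_pos (maxPos π) with hp0 | hp0
    · exact .inr ⟨1, one_pos, hn, isSkewCut_one_of_maxPos_eq_zero hp0⟩
    by_cases hpm : maxPos π = m
    · exact .inl ⟨m, by omega, by omega, isSumCut_of_maxPos_eq hpm⟩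
    replace hpm : maxPos π < m := by have := maxPos_lt π; omega
    rcases ih hπ.eraseMax (by omega) with ⟨k, hk0, hkm, hk⟩ | ⟨k, hk0, hkm, hk⟩
    · by_cases hkp : k ≤ maxPos π
      · exact .inl ⟨k, hk0, by omega, hk.of_eraseMax hkp hkm.le⟩
      · exact .inl ⟨maxPos π, hp0, by omega,
          isSumCut_maxPos_of_eraseMax hπ.1 hk (by omega) hkm⟩
    · by_cases hpk : maxPos π ≤ k
      · exact .inr ⟨k + 1, by omega, by omega, hk.succ_of_eraseMax hpk⟩
      · exact .inr ⟨maxPos π + 1, by omega, by omega,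
          isSkewCut_maxPos_succ_of_eraseMax hπ.2 hk hk0 (by omega) hpm⟩

end EraseMax

section Counting

open scoped Classical

variable {n : ℕ}

lemma SepPerm.sumDecomposable_iff_not_skewDecomposable {π : Perm (Fin n)} (hπ : SepPerm π)
    (hn : 2 ≤ n) : SumDecomposable π ↔ ¬ SkewDecomposable π :=
  ⟨SumDecomposable.not_skewDecomposable,
    (hπ.sumDecomposable_or_skewDecomposable hn).resolve_right⟩

noncomputable def sepSumIndecPoly (n : ℕ) : ℤ[X] :=
  ∑ π ∈ univ.filter (fun π : Perm (Fin n) => SepPerm π ∧ ¬ SumDecomposable π),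
    X ^ desNum π

noncomputable def sepSkewIndecPoly (n : ℕ) : ℤ[X] :=
  ∑ π ∈ univ.filter (fun π : Perm (Fin n) => SepPerm π ∧ ¬ SkewDecomposable π),
    X ^ desNum π

lemma sum_desNum_fin_one {P : Perm (Fin 1) → Prop} [DecidablePred P] (hP : ∀ π, P π) :
    ∑ π ∈ univ.filter P, (X : ℤ[X]) ^ desNum π = 1 := by
  rw [filter_true_of_mem fun π _ => hP π]
  simp [desNum]

lemma sepPoly_one : sepPoly 1 = 1 :=
  sum_desNum_fin_one fun π => sepPerm_of_lt π (by omega)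

lemma sepSumIndecPoly_one : sepSumIndecPoly 1 = 1 :=
  sum_desNum_fin_one (P := fun π => SepPerm π ∧ ¬ SumDecomposable π) fun π =>
    ⟨sepPerm_of_lt π (by omega), fun ⟨_, h0, h1, _⟩ => by omega⟩

lemma sepSkewIndecPoly_one : sepSkewIndecPoly 1 = 1 :=
  sum_desNum_fin_one (P := fun π => SepPerm π ∧ ¬ SkewDecomposable π) fun π =>
    ⟨sepPerm_of_lt π (by omega), fun ⟨_, h0, h1, _⟩ => by omega⟩

lemma sepPoly_eq_sepSumIndecPoly_add_sepSkewIndecPoly (hn : 2 ≤ n) :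
    sepPoly n = sepSumIndecPoly n + sepSkewIndecPoly n := by
  rw [sepPoly, ← sum_filter_add_sum_filter_not _ (fun π => ¬ SumDecomposable π), filter_filter,
    filter_filter, sepSumIndecPoly, sepSkewIndecPoly]
  congr 1
  refine sum_congr (filter_congr fun π _ => ?_) fun _ _ => rfl
  exact and_congr_right fun hπ => not_not.trans (hπ.sumDecomposable_iff_not_skewDecomposable hn)

lemma filter_minSumCut_eq_image {a b : ℕ} (ha : 0 < a) (hb : 0 < b) :
    {π ∈ univ.filter (fun π : Perm (Fin (a + b)) => SepPerm π ∧ SumDecomposable π) |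
      minSumCut π = a} =
    (univ.filter (fun α : Perm (Fin a) => SepPerm α ∧ ¬ SumDecomposable α) ×ˢ
      univ.filter (fun β : Perm (Fin b) => SepPerm β)).image fun p => directSum p.1 p.2 := by
  ext π
  simp only [mem_filter, mem_univ, true_and, mem_image, mem_product, Prod.exists]
  constructor
  · rintro ⟨⟨hsep, -⟩, hmin⟩
    obtain ⟨α, β, hα, rfl⟩ := (minSumCut_eq_iff ha).mp hmin
    obtain ⟨hα', hβ⟩ := (sepPerm_directSum_iff α β).mp hsep
    exact ⟨α, β, ⟨⟨hα', hα⟩, hβ⟩, rfl⟩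
  · rintro ⟨α, β, ⟨⟨hα', hα⟩, hβ⟩, rfl⟩
    exact ⟨⟨(sepPerm_directSum_iff α β).mpr ⟨hα', hβ⟩, a, ha, by omega, isSumCut_directSum α β⟩,
      (minSumCut_eq_iff ha).mpr ⟨α, β, hα, rfl⟩⟩

lemma filter_minSkewCut_eq_image {a b : ℕ} (ha : 0 < a) (hb : 0 < b) :
    {π ∈ univ.filter (fun π : Perm (Fin (a + b)) => SepPerm π ∧ SkewDecomposable π) |
      minSkewCut π = a} =
    (univ.filter (fun α : Perm (Fin a) => SepPerm α ∧ ¬ SkewDecomposable α) ×ˢ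
      univ.filter (fun β : Perm (Fin b) => SepPerm β)).image fun p => skewSum p.1 p.2 := by
  ext π
  simp only [mem_filter, mem_univ, true_and, mem_image, mem_product, Prod.exists]
  constructor
  · rintro ⟨⟨hsep, -⟩, hmin⟩
    obtain ⟨α, β, hα, rfl⟩ := (minSkewCut_eq_iff ha).mp hmin
    obtain ⟨hα', hβ⟩ := (sepPerm_skewSum_iff α β).mp hsep
    exact ⟨α, β, ⟨⟨hα', hα⟩, hβ⟩, rfl⟩
  · rintro ⟨α, β, ⟨⟨hα', hα⟩, hβ⟩, rfl⟩
    exact ⟨⟨(sepPerm_skewSum_iff α β).mpr ⟨hα', hβ⟩, a, ha, by omega, isSkewCut_skewSum α β⟩,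
      (minSkewCut_eq_iff ha).mpr ⟨α, β, hα, rfl⟩⟩

lemma sum_sepPerm_sumDecomposable (n : ℕ) :
    ∑ π ∈ univ.filter (fun π : Perm (Fin n) => SepPerm π ∧ SumDecomposable π),
        X ^ desNum π =
      ∑ a ∈ Ico 1 n, sepSumIndecPoly a * sepPoly (n - a) := by
  rw [← sum_fiberwise_of_maps_to (g := minSumCut) (t := Ico 1 n) fun π hπ =>
    mem_Ico.mpr ⟨(minSumCut_spec π).1,
      sumDecomposable_iff_minSumCut_lt.mp (mem_filter.mp hπ).2.2⟩]
  refine sum_congr rfl fun a ha => ?_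
  rw [mem_Ico] at ha
  obtain ⟨b, rfl⟩ : ∃ b, n = a + b := ⟨n - a, by omega⟩
  rw [filter_minSumCut_eq_image ha.1 (by omega),
    sum_image fun p _ q _ h => Prod.ext_iff.mpr (directSum_injective2 h), sum_product,
    Nat.add_sub_cancel_left, sepSumIndecPoly, sepPoly, sum_mul_sum]
  refine sum_congr rfl fun α _ => sum_congr rfl fun β _ => ?_
  rw [desNum_directSum α β ha.1 (by omega), pow_add]

lemma sum_sepPerm_skewDecomposable (n : ℕ) :
    ∑ π ∈ univ.filter (fun π : Perm (Fin n) => SepPerm π ∧ SkewDecomposable π),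
        X ^ desNum π =
      X * ∑ a ∈ Ico 1 n, sepSkewIndecPoly a * sepPoly (n - a) := by
  rw [← sum_fiberwise_of_maps_to (g := minSkewCut) (t := Ico 1 n) fun π hπ =>
    mem_Ico.mpr ⟨(minSkewCut_spec π).1,
      skewDecomposable_iff_minSkewCut_lt.mp (mem_filter.mp hπ).2.2⟩, mul_sum]
  refine sum_congr rfl fun a ha => ?_
  rw [mem_Ico] at ha
  obtain ⟨b, rfl⟩ : ∃ b, n = a + b := ⟨n - a, by omega⟩
  rw [filter_minSkewCut_eq_image ha.1 (by omega),
    sum_image fun p _ q _ h => Prod.ext_iff.mpr (skewSum_injective2 h), sum_product,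
    Nat.add_sub_cancel_left, sepSkewIndecPoly, sepPoly, sum_mul_sum, mul_sum]
  refine sum_congr rfl fun α _ => ?_
  rw [mul_sum]
  refine sum_congr rfl fun β _ => ?_
  rw [desNum_skewSum α β ha.1 (by omega)]
  ring

lemma sepSkewIndecPoly_eq_sum (hn : 2 ≤ n) :
    sepSkewIndecPoly n = ∑ a ∈ Ico 1 n, sepSumIndecPoly a * sepPoly (n - a) := by
  rw [← sum_sepPerm_sumDecomposable, sepSkewIndecPoly]
  refine sum_congr (filter_congr fun π _ => ?_) fun _ _ => rfl
  exact and_congr_right fun hπ => (hπ.sumDecomposable_iff_not_skewDecomposable hn).symm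

lemma sepSumIndecPoly_eq_X_mul_sum (hn : 2 ≤ n) :
    sepSumIndecPoly n = X * ∑ a ∈ Ico 1 n, sepSkewIndecPoly a * sepPoly (n - a) := by
  rw [← sum_sepPerm_skewDecomposable, sepSumIndecPoly]
  refine sum_congr (filter_congr fun π _ => ?_) fun _ _ => rfl
  exact and_congr_right fun hπ =>
    (not_congr (hπ.sumDecomposable_iff_not_skewDecomposable hn)).trans not_not

end Counting

section Series

noncomputable def genSeries (P : ℕ → ℤ[X]) : PowerSeries ℚ[X] :=
  PowerSeries.mk fun n => if n = 0 then 0 else (P n).map (Int.castRingHom ℚ)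

lemma coeff_genSeries (P : ℕ → ℤ[X]) (n : ℕ) :
    PowerSeries.coeff n (genSeries P) = if n = 0 then 0 else (P n).map (Int.castRingHom ℚ) :=
  PowerSeries.coeff_mk _ _

lemma coeff_genSeries_mul (P Q : ℕ → ℤ[X]) (n : ℕ) :
    PowerSeries.coeff n (genSeries P * genSeries Q) =
      (∑ a ∈ Ico 1 n, P a * Q (n - a)).map (Int.castRingHom ℚ) := by
  rw [PowerSeries.coeff_mul, Nat.sum_antidiagonal_eq_sum_range_succ_mk, Polynomial.map_sum,
    ← sum_subset (s₁ := Ico 1 n) (fun a ha => by simp at ha ⊢; omega) fun a _ ha => ?_]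
  · refine sum_congr rfl fun a ha => ?_
    rw [mem_Ico] at ha
    simp only [coeff_genSeries, if_neg (show a ≠ 0 by omega), if_neg (show n - a ≠ 0 by omega),
      Polynomial.map_mul]
  · simp only [coeff_genSeries, mem_Ico, not_and_or, not_lt] at ha ⊢
    rcases ha with ha | ha
    · simp [show a = 0 by omega]
    · simp [show n - a = 0 by omega]

lemma sepSeries_eq_genSeries : sepSeries = genSeries sepPoly := rfl

lemma sepSeries_add_X :
    sepSeries + PowerSeries.X = genSeries sepSumIndecPoly + genSeries sepSkewIndecPoly := by
  refine PowerSeries.ext fun n => ?_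
  rw [sepSeries_eq_genSeries]
  simp only [map_add, coeff_genSeries, PowerSeries.coeff_X]
  rcases n with _ | _ | n
  · simp
  · simp [sepPoly_one, sepSumIndecPoly_one, sepSkewIndecPoly_one]
  · simp [sepPoly_eq_sepSumIndecPoly_add_sepSkewIndecPoly (show 2 ≤ n + 2 by omega)]

lemma genSeries_sepSkewIndecPoly :
    genSeries sepSkewIndecPoly = PowerSeries.X + genSeries sepSumIndecPoly * sepSeries := by
  refine PowerSeries.ext fun n => ?_
  rw [map_add, coeff_genSeries, PowerSeries.coeff_X, sepSeries_eq_genSeries, coeff_genSeries_mul]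
  rcases n with _ | _ | n
  · simp
  · simp [sepSkewIndecPoly_one]
  · simp [sepSkewIndecPoly_eq_sum (show 2 ≤ n + 2 by omega)]

lemma genSeries_sepSumIndecPoly :
    genSeries sepSumIndecPoly =
      PowerSeries.X + PowerSeries.C Polynomial.X * (genSeries sepSkewIndecPoly * sepSeries) := by
  refine PowerSeries.ext fun n => ?_
  rw [map_add, coeff_genSeries, PowerSeries.coeff_X, PowerSeries.coeff_C_mul,
    sepSeries_eq_genSeries, coeff_genSeries_mul]
  rcases n with _ | _ | n
  · simp
  · simp [sepSumIndecPoly_one]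
  · simp [sepSumIndecPoly_eq_X_mul_sum (show 2 ≤ n + 2 by omega)]

end Series

theorem sepSeries_cubic_equation :
    sepSeries = PowerSeries.X
      + (1 + PowerSeries.C (R := Polynomial ℚ) Polynomial.X) * PowerSeries.X * sepSeries
      + PowerSeries.C (R := Polynomial ℚ) Polynomial.X * PowerSeries.X * sepSeries ^ 2
      + PowerSeries.C (R := Polynomial ℚ) Polynomial.X * sepSeries ^ 3 := by
  have hS := sepSeries_add_X
  have hV := genSeries_sepSkewIndecPoly
  have hU := genSeries_sepSumIndecPoly
  set t := PowerSeries.C (R := Polynomial ℚ) Polynomial.X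
  set S := sepSeries
  -- `hS` and `hV` give `U (1 + S) = S`; insert `hV` into `hU` and multiply by `1 + S`.
  linear_combination (1 - t * S ^ 2) * hS + ((1 + S) * t * S + 1 - t * S ^ 2) * hV + (1 + S) * hU
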